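/- arXiv:0908.4387 — 2 statements merged into one kernel-verified Lean document; each statement's English description precedes it below -/
import Mathlib

section
/- For every n ≥ 1 there exists ε > 0 such that for every irrational z with b_n − ε < z < b_n one has k_{0,g_n}(z) ≥ z·g_n/g_{n+1}. Consequently, for every δ > 0 there exists an irrational z with z < b_n and k_{0,g_n}(z) > g_{n+2}/g_{n+1} − δ; that is, the supremum of k-values over irrational z < b_n is at least √(a_{n+1}) = g_{n+2}/g_{n+1}. -/
/-- The odd-indexed Fibonacci numbers: `g n = fib (2n-1)` for `n ≥ 1`, with `g 0 = 1`. -/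
def g : ℕ → ℕ
  | 0 => 1
  | (n+1) => Nat.fib (2*n+1)

/-- The number of lattice points in the triangle `T^a_{A,B} = {(x,y) : x ≥ 0, y ≥ 0, x + a·y ≤ A + a·B}`. -/
noncomputable def latticeCount (a : ℝ) (A B : ℕ) : ℕ :=
  Set.ncard {xy : ℤ × ℤ | 0 ≤ xy.1 ∧ 0 ≤ xy.2 ∧ (xy.1 : ℝ) + a * xy.2 ≤ (A : ℝ) + a * B}

/-- The smallest positive integer `d` such that `#(T^a_{A,B} ∩ ℤ²) ≤ (d+1)(d+2)/2`
(stated multiplied by 2 to avoid division). -/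
noncomputable def ddeg (a : ℝ) (A B : ℕ) : ℕ :=
  sInf {d : ℕ | 0 < d ∧ 2 * latticeCount a A B ≤ (d+1)*(d+2)}

/-- `k_{A,B}(a) := (A + a·B) / d^a_{A,B}`. -/
noncomputable def kABval (a : ℝ) (A B : ℕ) : ℝ := ((A : ℝ) + a * B) / (ddeg a A B)

/-!
For `0 < z < P / Q` with `P = g (n+2)`, `Q = g n` (coprime), the row of `T^z_{0,Q}` at height
`Q - m` holds `⌊z m⌋ + 1 ≤ ⌊P m / Q⌋ + 1` lattice points, and the bottom row fewer than `P`.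
The classical identity `2 ∑_{m<Q} ⌊P m / Q⌋ = (P - 1)(Q - 1)` for coprime `P, Q` then bounds
twice the count by `PQ + P + Q + 1 = (M + 1)(M + 2)`, where `M = g (n+1)`, since `PQ = M² + 1`
and `P + Q = 3M`. Hence `d ≤ M` and `k ≥ z Q / M`; letting irrational `z` increase to `P / Q`
gives `k`-values above `P / M - δ`.
-/

open Finset

theorem Nat.mul_div_add_mul_sub_div_of_coprime {P Q m : ℕ} (hPQ : P.Coprime Q) (hm : 0 < m)
    (hmQ : m < Q) : P * m / Q + P * (Q - m) / Q + 1 = P := by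
  have hQ : 0 < Q := hm.trans hmQ
  have hsum : P * m + P * (Q - m) = P * Q := by rw [← mul_add, Nat.add_sub_cancel' hmQ.le]
  have hndvd : ¬ Q ∣ P * m := fun h =>
    absurd (Nat.le_of_dvd hm (hPQ.symm.dvd_of_dvd_mul_left h)) (not_le.mpr hmQ)
  have hmod : Q ≤ P * m % Q + P * (Q - m) % Q := by
    have h0 : (P * m % Q + P * (Q - m) % Q) % Q = 0 := by
      rw [← Nat.add_mod, hsum, Nat.mul_mod_left]
    have hpos : 0 < P * m % Q := Nat.pos_of_ne_zero (mt Nat.dvd_of_mod_eq_zero hndvd)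
    by_contra! hlt
    rw [Nat.mod_eq_of_lt hlt] at h0
    omega
  rw [← Nat.add_div_eq_of_le_mod_add_mod hmod hQ, hsum, Nat.mul_div_cancel _ hQ]

theorem Nat.two_mul_sum_range_mul_div_of_coprime {P Q : ℕ} (hPQ : P.Coprime Q) :
    2 * ∑ m ∈ range Q, P * m / Q = (P - 1) * (Q - 1) := by
  rcases Nat.eq_zero_or_pos Q with rfl | hQ
  · simp
  have hsum : ∑ m ∈ range Q, P * m / Q = ∑ m ∈ Ico 1 Q, P * m / Q := by
    rw [range_eq_Ico, sum_eq_sum_Ico_succ_bot hQ]; simp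
  have hreflect : ∑ m ∈ Ico 1 Q, P * (Q - m) / Q = ∑ m ∈ Ico 1 Q, P * m / Q := by
    rw [sum_Ico_reflect (fun m => P * m / Q) 1 (Nat.le_succ Q), Nat.add_sub_cancel,
      Nat.add_sub_cancel_left]
  calc 2 * ∑ m ∈ range Q, P * m / Q
      = ∑ m ∈ Ico 1 Q, (P * m / Q + P * (Q - m) / Q) := by
        rw [sum_add_distrib, hreflect, hsum, two_mul]
    _ = ∑ m ∈ Ico 1 Q, (P - 1) := sum_congr rfl fun m hm => Nat.eq_sub_of_add_eq
          (Nat.mul_div_add_mul_sub_div_of_coprime hPQ (mem_Ico.mp hm).1 (mem_Ico.mp hm).2)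
    _ = (P - 1) * (Q - 1) := by simp [mul_comm]

theorem latticeCount_zero_le_sum {z : ℝ} (hz : 0 < z) (B : ℕ) :
    latticeCount z 0 B ≤ ∑ m ∈ range (B + 1), (⌊z * m⌋₊ + 1) := by
  set F := ((range (B + 1)).sigma fun m => range (⌊z * m⌋₊ + 1)).image
    fun p => ((p.2 : ℤ), ((B - p.1 : ℕ) : ℤ))
  have hsub : {xy : ℤ × ℤ | 0 ≤ xy.1 ∧ 0 ≤ xy.2 ∧
      (xy.1 : ℝ) + z * xy.2 ≤ ((0 : ℕ) : ℝ) + z * B} ⊆ F := by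
    rintro ⟨x, y⟩ ⟨hx, hy, hxy⟩
    lift x to ℕ using hx
    lift y to ℕ using hy
    push_cast at hxy
    have hyB : y ≤ B := by
      have : (y : ℝ) ≤ B := le_of_mul_le_mul_left (by linarith [x.cast_nonneg (α := ℝ)]) hz
      exact_mod_cast this
    simp only [F, coe_image, Set.mem_image, mem_coe, mem_sigma, mem_range]
    refine ⟨⟨B - y, x⟩, ⟨Nat.sub_lt_succ B y, Nat.lt_succ_of_le (Nat.le_floor ?_)⟩,
      by simp [Nat.sub_sub_self hyB]⟩
    rw [Nat.cast_sub hyB]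
    linarith
  calc latticeCount z 0 B ≤ F.card := by
        rw [latticeCount, ← Set.ncard_coe_finset]; exact Set.ncard_le_ncard hsub F.finite_toSet
    _ ≤ _ := card_image_le
    _ = ∑ m ∈ range (B + 1), (⌊z * m⌋₊ + 1) := by simp [card_sigma]

theorem two_mul_latticeCount_le_of_coprime {P Q : ℕ} (hPQ : P.Coprime Q) {z : ℝ} (hz : 0 < z)
    (hzPQ : z < P / Q) : 2 * latticeCount z 0 Q ≤ P * Q + P + Q + 1 := by
  have hQ : 0 < Q := Nat.pos_of_ne_zero fun h => by simp [h] at hzPQ; linarith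
  have hQ' : (0 : ℝ) < Q := by exact_mod_cast hQ
  have hfloor (m : ℕ) : ⌊z * m⌋₊ ≤ P * m / Q := by
    rw [← Nat.floor_div_eq_div (K := ℝ)]
    refine Nat.floor_mono ?_
    rw [Nat.cast_mul, mul_div_right_comm]
    exact mul_le_mul_of_nonneg_right hzPQ.le m.cast_nonneg
  have hlast : ⌊z * Q⌋₊ < P :=
    (Nat.floor_lt (by positivity)).mpr ((lt_div_iff₀ hQ').mp hzPQ)
  have hcount : latticeCount z 0 Q ≤ ∑ m ∈ range Q, P * m / Q + Q + P := by
    calc latticeCount z 0 Q ≤ ∑ m ∈ range (Q + 1), (⌊z * m⌋₊ + 1) :=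
          latticeCount_zero_le_sum hz Q
      _ = ∑ m ∈ range Q, ⌊z * m⌋₊ + Q + (⌊z * Q⌋₊ + 1) := by
          rw [sum_range_succ, sum_add_distrib, sum_const, card_range, smul_eq_mul, mul_one]
      _ ≤ ∑ m ∈ range Q, P * m / Q + Q + P := by
          gcongr with m
          exacts [hfloor m, hlast]
  have hsum := Nat.two_mul_sum_range_mul_div_of_coprime hPQ
  have hP : 1 ≤ P := by omega
  zify [hP, hQ] at hsum hcount ⊢
  linarith

theorem ddeg_pos (a : ℝ) (A B : ℕ) : 0 < ddeg a A B := by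
  set N := latticeCount a A B
  have hne : {d : ℕ | 0 < d ∧ 2 * N ≤ (d + 1) * (d + 2)}.Nonempty :=
    ⟨N + 1, N.succ_pos, by nlinarith⟩
  exact (Nat.sInf_mem hne).1

theorem ddeg_le {a : ℝ} {A B d : ℕ} (hd : 0 < d)
    (h : 2 * latticeCount a A B ≤ (d + 1) * (d + 2)) : ddeg a A B ≤ d :=
  Nat.sInf_le (⟨hd, h⟩ : 0 < d ∧ _)

theorem div_le_kABval {a : ℝ} {A B d : ℕ} (hd : 0 < d)
    (h : 2 * latticeCount a A B ≤ (d + 1) * (d + 2)) (ha : 0 ≤ A + a * B) :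
    (A + a * B) / d ≤ kABval a A B :=
  div_le_div_of_nonneg_left ha (by exact_mod_cast ddeg_pos a A B)
    (by exact_mod_cast ddeg_le hd h)

theorem g_pos : ∀ n, 0 < g n
  | 0 => Nat.one_pos
  | _ + 1 => Nat.fib_pos.mpr (Nat.succ_pos _)

theorem g_add_two_add_g : ∀ n, g (n + 2) + g n = 3 * g (n + 1)
  | 0 => rfl
  | n + 1 => by
    have h3 : Nat.fib (2 * n + 3) = Nat.fib (2 * n + 1) + Nat.fib (2 * n + 2) := Nat.fib_add_two
    have h4 : Nat.fib (2 * n + 4) = Nat.fib (2 * n + 2) + Nat.fib (2 * n + 3) := Nat.fib_add_two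
    have h5 : Nat.fib (2 * n + 5) = Nat.fib (2 * n + 3) + Nat.fib (2 * n + 4) := Nat.fib_add_two
    change Nat.fib (2 * n + 5) + Nat.fib (2 * n + 1) = 3 * Nat.fib (2 * n + 3)
    omega

theorem g_add_two_mul_g (n : ℕ) : g (n + 2) * g n = g (n + 1) ^ 2 + 1 := by
  induction n with
  | zero => rfl
  | succ n ih =>
    have h1 := g_add_two_add_g n
    have h2 := g_add_two_add_g (n + 1)
    zify at ih h1 h2 ⊢
    linear_combination (g (n + 1) : ℤ) * h2 - (g (n + 2) : ℤ) * h1 + ih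

theorem g_add_two_coprime : ∀ n, (g (n + 2)).Coprime (g n)
  | 0 => Nat.coprime_one_right _
  | n + 1 => by
    have hodd : Nat.Coprime 4 (2 * n + 1) :=
      Nat.Coprime.pow_left 2 (odd_two_mul_add_one n).coprime_two_left
    simp only [g, Nat.Coprime, ← Nat.fib_gcd]
    rw [show 2 * (n + 1 + 1) + 1 = 4 + (2 * n + 1) by ring, Nat.gcd_add_self_left,
      hodd.gcd_eq_one]
    rfl

theorem g_mul_div_le_kABval (n : ℕ) {z : ℝ} (hz : 0 < z) (hzb : z < g (n + 2) / g n) :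
    z * g n / g (n + 1) ≤ kABval z 0 (g n) := by
  have hcount : 2 * latticeCount z 0 (g n) ≤ (g (n + 1) + 1) * (g (n + 1) + 2) := by
    have h := two_mul_latticeCount_le_of_coprime (g_add_two_coprime n) hz hzb
    have hmul := g_add_two_mul_g n
    have hadd := g_add_two_add_g n
    linarith
  simpa using div_le_kABval (g_pos (n + 1)) hcount (by positivity)

theorem ech_fibonacci_bound_general (n : ℕ) :
    (∃ ε > (0 : ℝ), ∀ z : ℝ, Irrational z →
      (g (n+2) : ℝ)/(g n) - ε < z → z < (g (n+2) : ℝ)/(g n) →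
        z * (g n) / (g (n+1)) ≤ kABval z 0 (g n)) ∧
    (∀ δ > (0 : ℝ), ∃ z : ℝ, Irrational z ∧ z < (g (n+2) : ℝ)/(g n) ∧
      (g (n+2) : ℝ)/(g (n+1)) - δ < kABval z 0 (g n)) := by
  have hQ : (0 : ℝ) < g n := by exact_mod_cast g_pos n
  have hM : (0 : ℝ) < g (n + 1) := by exact_mod_cast g_pos (n + 1)
  have hb : (0 : ℝ) < g (n + 2) / g n := div_pos (by exact_mod_cast g_pos (n + 2)) hQ
  refine ⟨⟨_, hb, fun z _ hz hzb => g_mul_div_le_kABval n (by linarith) hzb⟩, fun δ hδ => ?_⟩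
  obtain ⟨z, hz, hlo, hhi⟩ := exists_irrational_btwn
    (max_lt hb (sub_lt_self _ (by positivity : (0 : ℝ) < δ * g (n + 1) / g n)))
  refine ⟨z, hz, hhi, ?_⟩
  calc (g (n + 2) : ℝ) / g (n + 1) - δ
        = (g (n + 2) / g n - δ * g (n + 1) / g n) * g n / g (n + 1) := by field_simp
    _ < z * g n / g (n + 1) := by
        gcongr
        exact (le_max_right _ _).trans_lt hlo
    _ ≤ kABval z 0 (g n) := g_mul_div_le_kABval n ((le_max_left _ _).trans_lt hlo) hhi

/-- Lemma `le:ECH2`: with `b_n = g_{n+2}/g_n`, there is `ε > 0` such that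
`k_{0,g_n}(z) ≥ z·g_n/g_{n+1}` for all irrational `z ∈ (b_n − ε, b_n)`; consequently for every
`δ > 0` there is an irrational `z < b_n` with `k_{0,g_n}(z) > g_{n+2}/g_{n+1} − δ`, so that
the supremum of the `k`-values over irrational `z < b_n` is at least `√(a_{n+1}) = g_{n+2}/g_{n+1}`. -/
theorem ech_fibonacci_bound (n : ℕ) (hn : 1 ≤ n) :
    (∃ ε > (0 : ℝ), ∀ z : ℝ, Irrational z →
      (g (n+2) : ℝ)/(g n) - ε < z → z < (g (n+2) : ℝ)/(g n) →
        z * (g n) / (g (n+1)) ≤ kABval z 0 (g n)) ∧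
    (∀ δ > (0 : ℝ), ∃ z : ℝ, Irrational z ∧ z < (g (n+2) : ℝ)/(g n) ∧
      (g (n+2) : ℝ)/(g (n+1)) - δ < kABval z 0 (g n)) :=
  ech_fibonacci_bound_general n
end

section
/- For all positive integers p ≥ q ≥ 1, the sum of the entries of the label sequence W(p,q) equals p + q − gcd(p,q). In particular, for a = p/q ≥ 1 in lowest terms, the weight expansion w(a) = (1/q)·W(p,q) satisfies Σ_i w_i = a + 1 − 1/q. -/
/-!
Each pass of the Euclidean recursion contributes `⌊p/q⌋·q = p - (p mod q)` to the sum and replaces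
`(p, q)` by `(q, p mod q)`, so the sum telescopes to `p + q` minus the final nonzero remainder,
which is `gcd p q`.
-/

/-- The label sequence `W(p,q)`, defined by the Euclidean recursion: if `q ∣ p` then `q`
repeated `p/q` times; otherwise `q` repeated `⌊p/q⌋` times followed by `W q (p % q)`. -/
def W (p q : ℕ) : List ℕ :=
  if hq : q = 0 then []
  else if p % q = 0 then List.replicate (p / q) q
  else List.replicate (p / q) q ++ W q (p % q)
termination_by q
decreasing_by exact Nat.mod_lt _ (Nat.pos_of_ne_zero hq)

@[simp]
theorem W_zero_right (p : ℕ) : W p 0 = [] := by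
  rw [W, dif_pos rfl]

theorem W_of_pos {q : ℕ} (p : ℕ) (hq : 0 < q) :
    W p q = List.replicate (p / q) q ++ W q (p % q) := by
  rw [W, dif_neg hq.ne']
  split_ifs with h
  · rw [h, W_zero_right, List.append_nil]
  · rfl

theorem sum_W_add_gcd (p q : ℕ) : (W p q).sum + Nat.gcd p q = p + q := by
  induction q, p using Nat.gcd.induction with
  | H0 p => simp
  | H1 q p hq ih =>
    have hgcd : Nat.gcd p q = Nat.gcd q (p % q) := by
      rw [Nat.gcd_comm, Nat.gcd_rec, Nat.gcd_comm]
    have hdiv : p / q * q + p % q = p := Nat.div_add_mod' p q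
    rw [W_of_pos p hq, List.sum_append, List.sum_replicate, smul_eq_mul, hgcd]
    omega

theorem weight_expansion_sum_general (p q : ℕ) :
    (W p q).sum = p + q - Nat.gcd p q := by
  have := sum_W_add_gcd p q
  omega

/-- for all positive integers `p ≥ q ≥ 1`, the sum of the entries of the label
sequence `W(p,q)` equals `p + q − gcd(p,q)` (in particular, for `a = p/q` in lowest terms the
weight expansion `w(a) = (1/q)·W(p,q)` satisfies `Σ wᵢ = a + 1 − 1/q`). -/
theorem weight_expansion_sum (p q : ℕ) (hq : 1 ≤ q) (hqp : q ≤ p) :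
    (W p q).sum = p + q - Nat.gcd p q :=
  weight_expansion_sum_general p q
end
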